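/- arXiv:0704.2813 — 2 statements merged into one kernel-verified Lean document; each statement's English description precedes it below -/
import Mathlib

section
/- Fix a rank r ≥ 1 and natural number weights u_1,…,u_r, l, d_1,…,d_r, and let A_{s,t}(x) = Σ_{n≥0} |𝒜_{s,t}(n)| x^n ∈ ℚ⟦x⟧. Then for all i, j with 1 ≤ i ≤ r−1 and 0 ≤ j ≤ r−1, the generating functions satisfy A_{i,j} = A_{i−1,j−1} + x·A_{0,j}·Σ_{q=1}^{r} d_q A_{i−1,q−1}, where A_{i−1,j−1} is interpreted as 0 when j = 0. -/
open PowerSeries Finset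

/-- The weight (number of color choices) of a single step of vertical displacement `z`:
up-steps `(1,j)` have weight `u j`, the level-step `(1,0)` has weight `l`, and
down-steps `(1,-j)` have weight `d j`. -/
def stepWeight (u : ℕ → ℕ) (l : ℕ) (d : ℕ → ℕ) (z : ℤ) : ℕ :=
  if 0 < z then u z.toNat else if z < 0 then d (-z).toNat else l

/-- `motzkinCount r u l d s t n` is the weighted number `|𝒜_{s,t}(n)|` of lattice paths of
length `n` using admissible steps `(1,z)` with `z ∈ {-r, …, r}` (step `i` is encoded by
`f i : Fin (2*r+1)` via `z = (f i : ℤ) - r`), starting at height `s`, ending at height `t`,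
and never going below the x-axis; each path is counted with weight the product of the
weights of its steps (i.e. the number of its colorings). -/
def motzkinCount (r : ℕ) (u : ℕ → ℕ) (l : ℕ) (d : ℕ → ℕ) (s t : ℕ) (n : ℕ) : ℕ :=
  ∑ f : Fin n → Fin (2 * r + 1),
    if (∀ k : Fin (n + 1),
          0 ≤ (s : ℤ) + ∑ i : Fin n, if (i : ℕ) < (k : ℕ) then ((f i : ℤ) - r) else 0) ∧
        (s : ℤ) + (∑ i : Fin n, ((f i : ℤ) - r)) = t
    then ∏ i : Fin n, stepWeight u l d ((f i : ℤ) - r)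
    else 0

/-- The generating function `A_{s,t}(x) = Σ_{n≥0} |𝒜_{s,t}(n)| xⁿ ∈ ℚ⟦x⟧`. -/
noncomputable def motzkinGF (r : ℕ) (u : ℕ → ℕ) (l : ℕ) (d : ℕ → ℕ) (s t : ℕ) :
    PowerSeries ℚ :=
  PowerSeries.mk fun n => (motzkinCount r u l d s t n : ℚ)

/-!
Extend `A_{s,t}` to all `t ∈ ℤ` by zero. Classifying paths by their last step shows that
`F_t = A_{s,t}` solves `F_t = [t = s] + x Σ_z w_z F_{t-z}` for `t ≥ 0`, and this system has at
most one solution, since it expresses the coefficients of `xⁿ⁺¹` through those of `xⁿ`.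
So it suffices that the first-passage decomposition `G_t = A_{i-1,t-1} + x A_{0,t} T`, with
`T = Σ_q d_q A_{i-1,q-1}`, solves the system for `s = i`. For `t ≥ 1` this is the recursion of `A_{i-1,·}` at `t - 1` plus that of
`A_{0,·}` at `t`. At `t = 0`, where `A_{i-1,-1} = 0`, the down-steps `D_q` from height `q - 1`
contribute exactly `x T`, which makes up for the seed `1` of `A_{0,0}`.
-/

section StepRecursion

variable {R : Type*} [CommRing R]

def SolvesStepRecursion (s : Finset ℤ) (w : ℤ → R) (e : ℤ → R⟦X⟧) (F : ℤ → R⟦X⟧) : Prop :=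
  (∀ t < 0, F t = 0) ∧ ∀ t, 0 ≤ t → F t = e t + X * ∑ z ∈ s, C (w z) * F (t - z)

theorem SolvesStepRecursion.unique {s : Finset ℤ} {w : ℤ → R} {e F G : ℤ → R⟦X⟧}
    (hF : SolvesStepRecursion s w e F) (hG : SolvesStepRecursion s w e G) : F = G := by
  have hdvd : ∀ n t, X ^ n ∣ F t - G t := by
    intro n
    induction n with
    | zero => simp
    | succ n ih =>
      intro t
      rcases lt_or_ge t 0 with ht | ht
      · simp [hF.1 t ht, hG.1 t ht]
      · rw [hF.2 t ht, hG.2 t ht, add_sub_add_left_eq_sub, ← mul_sub, ← sum_sub_distrib,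
          pow_succ']
        refine mul_dvd_mul_left X (Finset.dvd_sum fun z _ => ?_)
        rw [← mul_sub]
        exact dvd_mul_of_dvd_right (ih _) _
  funext t
  rw [← sub_eq_zero]
  ext n
  exact X_pow_dvd_iff.mp (hdvd (n + 1) t) n n.lt_succ_self

end StepRecursion

section Sums

variable {M : Type*} [AddCommMonoid M] {n : ℕ}

theorem sum_ite_val_lt_castSucc (x : Fin (n + 1) → M) (k : Fin (n + 1)) :
    (∑ i : Fin (n + 1), if (i : ℕ) < (k.castSucc : ℕ) then x i else 0) =
      ∑ i : Fin n, if (i : ℕ) < (k : ℕ) then x i.castSucc else 0 := by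
  rw [Fin.sum_univ_castSucc, if_neg (by simp [Nat.not_lt.mpr (Nat.le_of_lt_succ k.isLt)])]
  simp

theorem sum_ite_val_lt_last (x : Fin n → M) :
    (∑ i : Fin n, if (i : ℕ) < (Fin.last n : ℕ) then x i else 0) = ∑ i, x i :=
  Finset.sum_congr rfl fun i _ => if_pos i.isLt

theorem sum_fin_sub_eq_sum_Icc (r : ℕ) (f : ℤ → M) :
    ∑ a : Fin (2 * r + 1), f ((a : ℤ) - r) = ∑ z ∈ Icc (-(r : ℤ)) r, f z := by
  rw [Fin.sum_univ_eq_sum_range (fun m => f ((m : ℤ) - r))]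
  refine Finset.sum_nbij' (fun m => (m : ℤ) - r) (fun z => (z + r).toNat) ?_ ?_ ?_ ?_ ?_
  all_goals intro x hx; simp only [mem_range, mem_Icc] at hx ⊢
  all_goals omega

end Sums

section Paths

variable (r : ℕ) (u : ℕ → ℕ) (l : ℕ) (d : ℕ → ℕ)

def pathCount (s n : ℕ) (t : ℤ) : ℕ :=
  ∑ f : Fin n → Fin (2 * r + 1),
    if (∀ k : Fin (n + 1),
          0 ≤ (s : ℤ) + ∑ i : Fin n, if (i : ℕ) < (k : ℕ) then ((f i : ℤ) - r) else 0) ∧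
        (s : ℤ) + (∑ i : Fin n, ((f i : ℤ) - r)) = t
    then ∏ i : Fin n, stepWeight u l d ((f i : ℤ) - r)
    else 0

noncomputable def pathGF (s : ℕ) (t : ℤ) : ℚ⟦X⟧ :=
  PowerSeries.mk fun n => (pathCount r u l d s n t : ℚ)

theorem motzkinGF_eq_pathGF (s t : ℕ) : motzkinGF r u l d s t = pathGF r u l d s t := rfl

variable {r u l d}

theorem pathCount_of_neg {s n : ℕ} {t : ℤ} (ht : t < 0) : pathCount r u l d s n t = 0 := by
  refine Finset.sum_eq_zero fun f _ => if_neg ?_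
  rintro ⟨hpre, hend⟩
  have := hpre (Fin.last n)
  rw [sum_ite_val_lt_last] at this
  omega

theorem pathCount_zero (s : ℕ) (t : ℤ) :
    pathCount r u l d s 0 t = if t = s then 1 else 0 := by
  simp [pathCount, eq_comm]

theorem pathCount_succ (s n : ℕ) {t : ℤ} (ht : 0 ≤ t) :
    pathCount r u l d s (n + 1) t =
      ∑ a : Fin (2 * r + 1), stepWeight u l d ((a : ℤ) - r) *
        pathCount r u l d s n (t - ((a : ℤ) - r)) := by
  rw [pathCount, ← (Fin.snocEquiv fun _ => Fin (2 * r + 1)).sum_comp, Fintype.sum_prod_type]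
  refine Finset.sum_congr rfl fun a _ => ?_
  rw [pathCount, Finset.mul_sum]
  refine Finset.sum_congr rfl fun g _ => ?_
  simp only [Fin.snocEquiv_apply]
  have hsum : ∑ i : Fin (n + 1), ((Fin.snoc (α := fun _ => Fin (2 * r + 1)) g a i : ℤ) - r) =
      ∑ i : Fin n, ((g i : ℤ) - r) + ((a : ℤ) - r) := by
    rw [Fin.sum_univ_castSucc]; simp only [Fin.snoc_castSucc, Fin.snoc_last]
  have hprod : ∏ i : Fin (n + 1),
        stepWeight u l d ((Fin.snoc (α := fun _ => Fin (2 * r + 1)) g a i : ℤ) - r) =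
      stepWeight u l d ((a : ℤ) - r) * ∏ i : Fin n, stepWeight u l d ((g i : ℤ) - r) := by
    simp [Fin.prod_univ_castSucc, mul_comm]
  rw [hprod, mul_ite, mul_zero]
  refine if_congr ?_ rfl rfl
  rw [Fin.forall_fin_succ', sum_ite_val_lt_last, hsum]
  simp only [sum_ite_val_lt_castSucc, Fin.snoc_castSucc]
  -- the prefix condition at the last index is the end condition, which holds as `0 ≤ t`
  constructor
  · rintro ⟨⟨hpre, -⟩, hend⟩
    exact ⟨hpre, by omega⟩
  · rintro ⟨hpre, hend⟩
    exact ⟨⟨hpre, by omega⟩, by omega⟩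

theorem sum_Icc_stepWeight_mul_apply_neg_one_sub {R : Type*} [Semiring R] (F : ℤ → R⟦X⟧)
    (hF : ∀ t < 0, F t = 0) :
    ∑ z ∈ Icc (-(r : ℤ)) r, C (stepWeight u l d z : R) * F (-1 - z) =
      ∑ q ∈ Icc 1 r, C (d q : R) * F ((q : ℤ) - 1) := by
  rw [← Finset.sum_subset (Icc_subset_Icc_right (by omega : (-1 : ℤ) ≤ r)) fun z hz hz' => by
    rw [hF _ (by simp only [mem_Icc] at hz hz'; omega), mul_zero]]
  refine Finset.sum_nbij' (fun z => (-z).toNat) (fun q => -(q : ℤ)) ?_ ?_ ?_ ?_ ?_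
  all_goals intro x hx; simp only [mem_Icc] at hx ⊢
  all_goals try omega
  rw [stepWeight, if_neg (by omega), if_pos (by omega),
    show -1 - x = ((-x).toNat : ℤ) - 1 by omega]

variable (r u l d)

theorem pathGF_solvesStepRecursion (s : ℕ) :
    SolvesStepRecursion (Icc (-(r : ℤ)) r) (fun z => (stepWeight u l d z : ℚ))
      (fun t => if t = s then 1 else 0) (pathGF r u l d s) := by
  refine ⟨fun t ht => ?_, fun t ht => ?_⟩
  · ext n
    simp [pathGF, pathCount_of_neg ht]
  · ext n
    rcases n with _ | n
    · simp [pathGF, pathCount_zero]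
    · rw [map_add, coeff_succ_X_mul, map_sum, ← sum_fin_sub_eq_sum_Icc r]
      simp only [coeff_C_mul, pathGF, coeff_mk, pathCount_succ s n ht]
      simp [apply_ite (coeff (n + 1))]

theorem firstPassage_solvesStepRecursion {i : ℕ} (hi : 1 ≤ i) :
    SolvesStepRecursion (Icc (-(r : ℤ)) r) (fun z => (stepWeight u l d z : ℚ))
      (fun t => if t = i then 1 else 0)
      (fun t => pathGF r u l d (i - 1) (t - 1) + X * pathGF r u l d 0 t *
        ∑ q ∈ Icc 1 r, C (d q : ℚ) * pathGF r u l d (i - 1) ((q : ℤ) - 1)) := by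
  obtain ⟨hA_neg, hA⟩ := pathGF_solvesStepRecursion r u l d (i - 1)
  obtain ⟨hA₀_neg, hA₀⟩ := pathGF_solvesStepRecursion r u l d 0
  simp only [Nat.cast_zero] at hA hA₀
  set A := pathGF r u l d (i - 1)
  set A₀ := pathGF r u l d 0
  set T := ∑ q ∈ Icc 1 r, C (d q : ℚ) * A ((q : ℤ) - 1)
  refine ⟨fun t ht => ?_, fun t ht => ?_⟩ <;> beta_reduce
  · rw [hA_neg _ (by omega), hA₀_neg t ht, mul_zero, zero_mul, add_zero]
  have hsplit : ∑ z ∈ Icc (-(r : ℤ)) r, C (stepWeight u l d z : ℚ) *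
        (A (t - z - 1) + X * A₀ (t - z) * T) =
      ∑ z ∈ Icc (-(r : ℤ)) r, C (stepWeight u l d z : ℚ) * A (t - 1 - z) +
        X * (∑ z ∈ Icc (-(r : ℤ)) r, C (stepWeight u l d z : ℚ) * A₀ (t - z)) * T := by
    simp only [mul_add, sum_add_distrib, mul_sum, sum_mul, sub_right_comm t _ (1 : ℤ)]
    congr 1
    exact sum_congr rfl fun z _ => by ring
  rw [hsplit]
  rcases (show t = 0 ∨ 1 ≤ t by omega) with rfl | ht
  · have hdown :=
      sum_Icc_stepWeight_mul_apply_neg_one_sub (r := r) (u := u) (l := l) (d := d) A hA_neg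
    have hA₀0 := hA₀ 0 le_rfl
    rw [if_pos rfl] at hA₀0
    simp only [zero_sub] at hdown hA₀0 ⊢
    rw [hdown, hA_neg (-1) (by omega), if_neg (by omega)]
    linear_combination X * T * hA₀0
  · rw [hA₀ t (by omega), if_neg (by omega), hA (t - 1) (by omega)]
    simp only [sub_left_inj, Nat.cast_sub hi, Nat.cast_one]
    ring

end Paths

theorem motzkin_rank_gf_inner_general (r : ℕ) (u : ℕ → ℕ) (l : ℕ) (d : ℕ → ℕ)
    (i j : ℕ) (hi1 : 1 ≤ i) :
    motzkinGF r u l d i j =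
      (if j = 0 then 0 else motzkinGF r u l d (i - 1) (j - 1))
        + X * motzkinGF r u l d 0 j *
            ∑ q ∈ Finset.Icc 1 r, C (d q : ℚ) * motzkinGF r u l d (i - 1) (q - 1) := by
  have hA := (pathGF_solvesStepRecursion r u l d i).unique
    (firstPassage_solvesStepRecursion r u l d hi1)
  have hshift : (if j = 0 then 0 else motzkinGF r u l d (i - 1) (j - 1)) =
      pathGF r u l d (i - 1) ((j : ℤ) - 1) := by
    rcases j with _ | j
    · exact ((pathGF_solvesStepRecursion r u l d (i - 1)).1 _ (by omega)).symm
    · simp [motzkinGF_eq_pathGF]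
  have hdown : ∑ q ∈ Icc 1 r, C (d q : ℚ) * motzkinGF r u l d (i - 1) (q - 1) =
      ∑ q ∈ Icc 1 r, C (d q : ℚ) * pathGF r u l d (i - 1) ((q : ℤ) - 1) :=
    sum_congr rfl fun q hq => by
      rw [motzkinGF_eq_pathGF, Nat.cast_sub (mem_Icc.mp hq).1, Nat.cast_one]
  rw [hshift, hdown, motzkinGF_eq_pathGF, motzkinGF_eq_pathGF, hA]

/-- for `1 ≤ i ≤ r−1` and `0 ≤ j ≤ r−1`,
`A_{i,j} = A_{i−1,j−1} + x·A_{0,j}·Σ_{q=1}^{r} d_q A_{i−1,q−1}`, where `A_{i−1,j−1}`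
is interpreted as `0` when `j = 0` (the convention `A_{s,t} = 0` for `t < 0`). -/
theorem motzkin_rank_gf_inner (r : ℕ) (hr : 1 ≤ r) (u : ℕ → ℕ) (l : ℕ) (d : ℕ → ℕ)
    (i j : ℕ) (hi1 : 1 ≤ i) (hi2 : i ≤ r - 1) (hj : j ≤ r - 1) :
    motzkinGF r u l d i j =
      (if j = 0 then 0 else motzkinGF r u l d (i - 1) (j - 1))
        + X * motzkinGF r u l d 0 j *
            ∑ q ∈ Finset.Icc 1 r, C (d q : ℚ) * motzkinGF r u l d (i - 1) (q - 1) :=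
  motzkin_rank_gf_inner_general r u l d i j hi1
end

section
/- For rank r = 2 with all weights equal to 1, the generating function M(x) ∈ ℚ⟦x⟧ of the non-colored Motzkin numbers of rank 2 satisfies 0 = 1 − (x+1)M + x(x+2)M² − x²(x+1)M³ + x⁴M⁴. -/
open PowerSeries Finset

/-!
Let `A s` be the generating function of the paths from height `s` down to `0`, and
`F(u) = ∑ₛ A s uˢ`. Splitting off the first step gives
`A s = [s = 0] + x ∑_{j=-2}^{2} A (s + j)` (terms of negative height omitted), which sums to the
kernel equation `(u² - x(1 + u + u² + u³ + u⁴)) F = u² + a u + e` with `e = -x A 0` and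
`a = -x (A 0 + A 1)`. Since `F` is invertible, `(u² + a u + e) F⁻¹` is the quartic kernel; as `x`
divides `a` and `e`, the coefficient recursion this imposes forces `F⁻¹` to be a polynomial of
degree two in `u`. Comparing coefficients in this factorization of the kernel and eliminating
`A 1` and the cofactor leaves the quartic equation for `M = A 0`.
-/

def IsMotzkinPath (r : ℕ) (s t : ℤ) {n : ℕ} (f : Fin n → Fin (2 * r + 1)) : Prop :=
  (∀ k : Fin (n + 1), 0 ≤ s + ∑ i : Fin n, if (i : ℕ) < (k : ℕ) then ((f i : ℤ) - r) else 0) ∧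
    s + ∑ i : Fin n, ((f i : ℤ) - r) = t

instance (r : ℕ) (s t : ℤ) {n : ℕ} (f : Fin n → Fin (2 * r + 1)) :
    Decidable (IsMotzkinPath r s t f) := by
  unfold IsMotzkinPath; infer_instance

theorem IsMotzkinPath.start_nonneg {r : ℕ} {s t : ℤ} {n : ℕ} {f : Fin n → Fin (2 * r + 1)}
    (hf : IsMotzkinPath r s t f) : 0 ≤ s := by
  simpa using hf.1 0

theorem isMotzkinPath_cons_iff {r : ℕ} {s t : ℤ} {n : ℕ} (j : Fin (2 * r + 1))
    (f : Fin n → Fin (2 * r + 1)) :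
    IsMotzkinPath r s t (Fin.cons j f : Fin (n + 1) → Fin (2 * r + 1)) ↔
      0 ≤ s ∧ IsMotzkinPath r (s + ((j : ℤ) - r)) t f := by
  simp only [IsMotzkinPath, Fin.forall_fin_succ, Fin.sum_univ_succ, Fin.cons_zero, Fin.cons_succ,
    Fin.val_zero, Fin.val_succ, Nat.not_lt_zero, Nat.zero_lt_succ, add_lt_add_iff_right,
    if_true, if_false, Finset.sum_const_zero, add_zero, add_assoc]
  tauto

theorem motzkinCount_eq_sum (r : ℕ) (u : ℕ → ℕ) (l : ℕ) (d : ℕ → ℕ) (s t n : ℕ) :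
    motzkinCount r u l d s t n = ∑ f : Fin n → Fin (2 * r + 1),
      if IsMotzkinPath r s t f then ∏ i, stepWeight u l d ((f i : ℤ) - r) else 0 := rfl

theorem motzkinCount_zero (r : ℕ) (u : ℕ → ℕ) (l : ℕ) (d : ℕ → ℕ) (s t : ℕ) :
    motzkinCount r u l d s t 0 = if s = t then 1 else 0 := by
  simp [motzkinCount]

theorem motzkinCount_succ (r : ℕ) (u : ℕ → ℕ) (l : ℕ) (d : ℕ → ℕ) (s t n : ℕ) :
    motzkinCount r u l d s t (n + 1) = ∑ j : Fin (2 * r + 1),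
      if 0 ≤ (s : ℤ) + ((j : ℤ) - r) then
        stepWeight u l d ((j : ℤ) - r) * motzkinCount r u l d ((s : ℤ) + ((j : ℤ) - r)).toNat t n
      else 0 := by
  rw [motzkinCount_eq_sum, ← (Fin.consEquiv fun _ => Fin (2 * r + 1)).sum_comp,
    Fintype.sum_prod_type]
  refine Finset.sum_congr rfl fun j _ => ?_
  have hcons (f : Fin n → Fin (2 * r + 1)) :
      (Fin.consEquiv fun _ => Fin (2 * r + 1)) (j, f) = Fin.cons j f := rfl
  simp only [hcons, isMotzkinPath_cons_iff, Nat.cast_nonneg, true_and,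
    Fin.prod_univ_succ, Fin.cons_zero, Fin.cons_succ]
  split_ifs with h
  · rw [motzkinCount_eq_sum, Finset.mul_sum, Int.toNat_of_nonneg h]
    simp only [mul_ite, mul_zero]
  · exact Finset.sum_eq_zero fun f _ => if_neg fun hf => h hf.start_nonneg

theorem motzkinGF_eq (r : ℕ) (u : ℕ → ℕ) (l : ℕ) (d : ℕ → ℕ) (s t : ℕ) :
    motzkinGF r u l d s t = (if s = t then 1 else 0) + X * ∑ j : Fin (2 * r + 1),
      if 0 ≤ (s : ℤ) + ((j : ℤ) - r) then
        (stepWeight u l d ((j : ℤ) - r) : ℚ) • motzkinGF r u l d ((s : ℤ) + ((j : ℤ) - r)).toNat t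
      else 0 := by
  ext (_ | n)
  · simp [motzkinGF, motzkinCount_zero]
  · simp [motzkinGF, motzkinCount_succ, coeff_succ_X_mul, apply_ite (coeff (n + 1)),
      apply_ite (coeff n), coeff_one]

theorem stepWeight_const_one (z : ℤ) : stepWeight (fun _ => 1) 1 (fun _ => 1) z = 1 := by
  unfold stepWeight; split_ifs <;> rfl

noncomputable abbrev uncoloredGF (s : ℕ) : ℚ⟦X⟧ := motzkinGF 2 (fun _ => 1) 1 (fun _ => 1) s 0

theorem uncoloredGF_eq (s : ℕ) :
    uncoloredGF s = (if s = 0 then 1 else 0) +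
      X * ∑ k ∈ range 5, if k ≤ s + 2 then uncoloredGF (s + 2 - k) else 0 := by
  rw [uncoloredGF, motzkinGF_eq]
  simp only [stepWeight_const_one, Nat.cast_one, one_smul, Nat.cast_ofNat]
  rw [Fin.sum_univ_eq_sum_range (fun j =>
      if 0 ≤ (s : ℤ) + ((j : ℤ) - 2) then uncoloredGF (s + (j - 2 : ℤ)).toNat else 0),
    ← Finset.sum_range_reflect]
  congr 2
  refine Finset.sum_congr rfl fun k hk => ?_
  have hk : k < 5 := Finset.mem_range.mp hk
  exact if_congr (by omega) (congrArg uncoloredGF (by omega)) rfl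

-- In `ℚ⟦X⟧⟦X⟧` the outer variable `u` marks the starting height, and `C X` is the length variable.
theorem uncolored_kernel_eq :
    (X ^ 2 - C X * ∑ k ∈ range 5, X ^ k) * PowerSeries.mk uncoloredGF =
      X ^ 2 + C (-X * (uncoloredGF 0 + uncoloredGF 1)) * X + C (-X * uncoloredGF 0) := by
  ext (_ | _ | s) : 1 <;>
    simp only [sub_mul, mul_assoc, Finset.sum_mul, map_sub, map_add, coeff_C_mul, map_sum,
      coeff_X_pow_mul', coeff_mk, coeff_X_pow, coeff_C, coeff_X]
  · simp
  · simp [sum_range_succ, add_comm]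
  · have hs : s + 1 + 1 = s + 2 := rfl
    simp only [hs, le_add_self, if_true, Nat.add_sub_cancel, Nat.add_eq_zero_iff,
      and_false, if_false, Nat.reduceEqDiff, mul_zero, add_zero]
    rw [uncoloredGF_eq s]
    ring

theorem PowerSeries.eq_zero_of_eq_X_mul {R : Type*} [CommSemiring R] {q : ℕ → R⟦X⟧} {b c : R⟦X⟧}
    (h : ∀ j, q j = X * (b * q (j + 1) + c * q (j + 2))) (j : ℕ) : q j = 0 := by
  have hdvd : ∀ m j, X ^ m ∣ q j := by
    intro m
    induction m with
    | zero => simp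
    | succ m ih =>
      intro j
      rw [h j, pow_succ']
      exact mul_dvd_mul_left X (dvd_add (Dvd.dvd.mul_left (ih _) _) (Dvd.dvd.mul_left (ih _) _))
  ext n
  simpa using X_pow_dvd_iff.mp (hdvd (n + 1) j) n n.lt_succ_self

theorem PowerSeries.coeff_quadratic_mul {R : Type*} [CommSemiring R] (a e : R) (P : R⟦X⟧) (j : ℕ) :
    coeff j ((X ^ 2 + C a * X + C e) * P) =
      (if 2 ≤ j then coeff (j - 2) P else 0) + a * (if 1 ≤ j then coeff (j - 1) P else 0) +
        e * coeff j P := by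
  rw [add_mul, add_mul, mul_assoc, map_add, map_add, coeff_X_pow_mul', coeff_C_mul, coeff_C_mul,
    ← pow_one (X : R⟦X⟧), coeff_X_pow_mul']

theorem isUnit_mk_uncoloredGF : IsUnit (PowerSeries.mk uncoloredGF) := by
  simp [isUnit_iff_constantCoeff, ← coeff_zero_eq_constantCoeff_apply, motzkinGF,
    motzkinCount_zero]

theorem exists_quadratic_mul_eq_uncolored_kernel : ∃ P : ℚ⟦X⟧⟦X⟧,
    (X ^ 2 + C (-X * (uncoloredGF 0 + uncoloredGF 1)) * X + C (-X * uncoloredGF 0)) * P =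
      X ^ 2 - C X * ∑ k ∈ range 5, X ^ k := by
  obtain ⟨P, hP⟩ := isUnit_mk_uncoloredGF.exists_right_inv
  exact ⟨P, by rw [← uncolored_kernel_eq, mul_assoc, hP, mul_one]⟩

-- The coefficients of `u⁰, …, u³` in `(u² + a u + e) (p₀ + p₁ u - x u²) = u² - x (1 + u + ⋯ + u⁴)`.
theorem exists_uncolored_kernel_cofactor : ∃ p₀ p₁ : ℚ⟦X⟧,
    X * uncoloredGF 0 * p₀ = X ∧
    X * (uncoloredGF 0 + uncoloredGF 1) * p₀ + X * uncoloredGF 0 * p₁ = X ∧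
    p₀ - X * (uncoloredGF 0 + uncoloredGF 1) * p₁ + X ^ 2 * uncoloredGF 0 = 1 - X ∧
    p₁ + X ^ 2 * (uncoloredGF 0 + uncoloredGF 1) = -X := by
  obtain ⟨P, hP⟩ := exists_quadratic_mul_eq_uncolored_kernel
  have hcoeff (j : ℕ) := congrArg (coeff j) hP
  simp only [coeff_quadratic_mul, map_sub, coeff_C_mul, map_sum, coeff_X_pow, sum_ite_eq,
    mem_range] at hcoeff
  -- `X` divides both lower coefficients of the quadratic factor, hence every power of `X` divides
  -- `coeff (j + 3) P`.
  have hvanish : ∀ j, coeff (j + 3) P = 0 :=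
    eq_zero_of_eq_X_mul (b := uncoloredGF 0 + uncoloredGF 1) (c := uncoloredGF 0) fun j => by
      have := hcoeff (j + 5)
      simp only [le_add_iff_nonneg_left, zero_le, if_true, Nat.reduceSubDiff, Nat.add_one_sub_one,
        Nat.reduceEqDiff, if_false, add_lt_iff_neg_right, not_lt_zero] at this
      linear_combination this
  have h₀ := hcoeff 0
  have h₁ := hcoeff 1
  have h₂ := hcoeff 2
  have h₃ := hcoeff 3
  have h₄ := hcoeff 4
  norm_num only [hvanish 0, hvanish 1, coeff_zero_eq_constantCoeff, if_true, if_false]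
    at h₀ h₁ h₂ h₃ h₄
  refine ⟨constantCoeff P, coeff 1 P, ?_, ?_, ?_, ?_⟩
  · linear_combination -h₀
  · linear_combination -h₁
  · linear_combination h₂ + X * uncoloredGF 0 * h₄
  · linear_combination h₃ + X * (uncoloredGF 0 + uncoloredGF 1) * h₄

theorem quartic_eq_zero_of_kernel_cofactor {R : Type*} [CommRing R] [IsDomain R]
    {x M S p₀ p₁ : R} (hx : x ≠ 0) (hxM : 1 + x * M ≠ 0)
    (h₀ : x * M * p₀ = x) (h₁ : x * S * p₀ + x * M * p₁ = x)
    (h₂ : p₀ - x * S * p₁ + x ^ 2 * M = 1 - x) (h₃ : p₁ + x ^ 2 * S = -x) :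
    1 - (x + 1) * M + x * (x + 2) * M ^ 2 - x ^ 2 * (x + 1) * M ^ 3 + x ^ 4 * M ^ 4 = 0 := by
  have hp₁ : p₁ = -x - x ^ 2 * S := by linear_combination h₃
  have hp₀ : p₀ = 1 - x - x ^ 2 * M - x ^ 2 * S - x ^ 3 * S ^ 2 := by
    linear_combination h₂ + x * S * hp₁
  have hMp₀ : M * p₀ = 1 := mul_left_cancel₀ hx (by linear_combination h₀)
  have hSp₀ : S * p₀ + M * p₁ = 1 := mul_left_cancel₀ hx (by linear_combination h₁)
  have hS : S * (1 - x * M) = M := by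
    refine mul_left_cancel₀ hxM ?_
    linear_combination M * hSp₀ - S * hMp₀ - M ^ 2 * hp₁
  -- Multiply `M * p₀ = 1` by `(1 - x * M) ^ 2`, then eliminate `S` with `hS`.
  linear_combination -(1 - x * M) ^ 2 * hMp₀ + (1 - x * M) ^ 2 * M * hp₀ -
    (x ^ 2 * M * (1 - x * M) + x ^ 3 * M * (M + S * (1 - x * M))) * hS

/-- the generating function `M` of the non-colored Motzkin numbers of rank 2
satisfies `0 = 1 − (x+1)M + x(x+2)M² − x²(x+1)M³ + x⁴M⁴`. -/
theorem motzkin_rank_two_uncolored_gf (M : PowerSeries ℚ)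
    (hM : M = motzkinGF 2 (fun _ => 1) 1 (fun _ => 1) 0 0) :
    (0 : PowerSeries ℚ) =
      1 - (X + 1) * M + X * (X + 2) * M ^ 2 - X ^ 2 * (X + 1) * M ^ 3 + X ^ 4 * M ^ 4 := by
  obtain ⟨p₀, p₁, h₀, h₁, h₂, h₃⟩ := exists_uncolored_kernel_cofactor
  have hXM : 1 + X * uncoloredGF 0 ≠ 0 := fun h => by simpa using congrArg constantCoeff h
  subst hM
  exact (quartic_eq_zero_of_kernel_cofactor X_ne_zero hXM h₀ h₁ h₂ h₃).symm
end
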